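/- arXiv:math/0010163 — 4 statements merged into one kernel-verified Lean document; each statement's English description precedes it below -/
import Mathlib

section
/- Let f ∈ ℂ[x₀,x₁,x₂,x₃] be a nonzero homogeneous polynomial of degree d ≥ 3, let L ⊂ ℙ³(ℂ) be a projective line, and let P₁,…,P_k ∈ L be k ≥ 2 distinct points, each of multiplicity ≥ 3 on the surface X = {f = 0}. If 2k > d − 1, then every point of L is a singular point of X (in particular f vanishes identically on L and X has non-isolated singularities). Consequently, a degree-d surface whose only singularities are ordinary triple points contains at most ⌊(d−1)/2⌋ triple points on any line; for d = 6, at most two triple points lie on a line. -/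
open MvPolynomial

noncomputable section

/-- Iterated partial derivative of `f` along a list of variable indices. -/
def pderivList {n : ℕ} (l : List (Fin n)) (f : MvPolynomial (Fin n) ℂ) :
    MvPolynomial (Fin n) ℂ :=
  l.foldl (fun g i => MvPolynomial.pderiv i g) f

/-- All partial derivatives of `f` of order `< m` vanish at `p`
(`P` has multiplicity `≥ m` on `{f = 0}`). -/
def MultAtLeast {n : ℕ} (f : MvPolynomial (Fin n) ℂ) (p : Fin n → ℂ) (m : ℕ) : Prop :=
  ∀ l : List (Fin n), l.length < m → MvPolynomial.eval p (pderivList l f) = 0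

/-- `p` is (a representative of) a singular point of `{f = 0}`. -/
def SingularAt (f : MvPolynomial (Fin 4) ℂ) (p : Fin 4 → ℂ) : Prop :=
  MultAtLeast f p 2

/-- The partial derivatives of `c` have no common zero in `ℂⁿ ∖ {0}`. -/
def NowhereSingular {n : ℕ} (c : MvPolynomial (Fin n) ℂ) : Prop :=
  ∀ p : Fin n → ℂ, p ≠ 0 → ∃ i, MvPolynomial.eval p (MvPolynomial.pderiv i c) ≠ 0

/-- Linear change of coordinates: `substMatrix B f` is the polynomial `x ↦ f (B.mulVec x)`. -/
def substMatrix {n : ℕ} (B : Matrix (Fin n) (Fin n) ℂ) (f : MvPolynomial (Fin n) ℂ) :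
    MvPolynomial (Fin n) ℂ :=
  MvPolynomial.aeval (fun i => ∑ j, MvPolynomial.C (B i j) * MvPolynomial.X j) f

/-- `p` is (a representative of) an ordinary triple point of the degree-`d` surface `{f = 0}`:
all partials of order `≤ 2` vanish at `p`, some third-order partial does not, and after a
linear change of coordinates taking `(0,0,0,1)` to `p`, writing `f` as
`∑ⱼ x₃^(d-j) fⱼ(x₀,x₁,x₂)` with `fⱼ` homogeneous of degree `j`, the cubic `f₃` is nonsingular. -/
def OrdinaryTriplePointAt (d : ℕ) (f : MvPolynomial (Fin 4) ℂ) (p : Fin 4 → ℂ) : Prop :=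
  MultAtLeast f p 3 ∧
  (∃ l : List (Fin 4), l.length = 3 ∧ MvPolynomial.eval p (pderivList l f) ≠ 0) ∧
  ∃ B : Matrix (Fin 4) (Fin 4) ℂ, IsUnit B.det ∧ B.mulVec ![0, 0, 0, 1] = p ∧
    ∃ g : ℕ → MvPolynomial (Fin 3) ℂ,
      (∀ j, (g j).IsHomogeneous j) ∧
      substMatrix B f =
        ∑ j ∈ Finset.range (d + 1),
          (MvPolynomial.X 3) ^ (d - j) * MvPolynomial.rename Fin.castSucc (g j) ∧
      NowhereSingular (g 3)

/-- The set of singular points of `{f = 0}` in `ℙ³(ℂ)`. -/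
def SingSet (f : MvPolynomial (Fin 4) ℂ) : Set (Projectivization ℂ (Fin 4 → ℂ)) :=
  {P | SingularAt f P.rep}

/-- `{f = 0}` has `ν` ordinary triple points as its only singularities. -/
def OnlyTriplePoints (d ν : ℕ) (f : MvPolynomial (Fin 4) ℂ) : Prop :=
  (SingSet f).Finite ∧ (SingSet f).ncard = ν ∧
  ∀ P ∈ SingSet f, OrdinaryTriplePointAt d f P.rep

/-!
Restrict `f` to an affine chart `r ↦ r • a + b` of the line, chosen so that none of the `k` points
is its point at infinity. By the chain rule the `j`-th derivative of the restriction is a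
combination of `j`-th partials of `f`, so a point of multiplicity `≥ m` on the surface is a root of
multiplicity `≥ m` of the restriction. A polynomial of degree `≤ d` with `k` roots of multiplicity
`≥ m` vanishes once `d < m k`: with `m = 3` for `f` and `m = 2` for its first partials (of degree
`d - 1 < 2k`), all of them vanish on the chart, hence, being homogeneous, on the whole line. A line
of singular points makes the singular locus infinite.
-/

open scoped Polynomial

theorem Polynomial.mul_card_le_natDegree_of_le_rootMultiplicity {R : Type*} [CommRing R]
    [IsDomain R] {q : R[X]} {s : Finset R} {m : ℕ}
    (h : ∀ x ∈ s, m ≤ q.rootMultiplicity x) : m * s.card ≤ q.natDegree := by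
  classical
  calc m * s.card = ∑ _x ∈ s, m := by rw [Finset.sum_const, smul_eq_mul, mul_comm]
    _ ≤ ∑ x ∈ s, q.roots.count x :=
        Finset.sum_le_sum fun x hx => (Polynomial.count_roots q).symm ▸ h x hx
    _ ≤ ∑ x ∈ s ∪ q.roots.toFinset, q.roots.count x :=
        Finset.sum_le_sum_of_subset Finset.subset_union_left
    _ = Multiset.card q.roots :=
        Multiset.sum_count_eq_card fun x hx =>
          Finset.mem_union_right _ (Multiset.mem_toFinset.2 hx)
    _ ≤ q.natDegree := Polynomial.card_roots' q

namespace MvPolynomial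

section LineRestrict

variable {R σ : Type*} [CommSemiring R]

theorem IsHomogeneous.eval_smul {φ : MvPolynomial σ R} {n : ℕ} (hφ : φ.IsHomogeneous n)
    (c : R) (x : σ → R) : eval (c • x) φ = c ^ n * eval x φ := by
  conv_lhs => rw [φ.as_sum]
  conv_rhs => rw [φ.as_sum]
  simp only [map_sum, Finset.mul_sum, eval_monomial]
  refine Finset.sum_congr rfl fun d hd => ?_
  have hdeg : ∑ i ∈ d.support, d i = n := by
    rw [← hφ (mem_support_iff.mp hd), Finsupp.weight_apply, Finsupp.sum]
    simp
  simp only [Finsupp.prod, Pi.smul_apply, smul_eq_mul, mul_pow, Finset.prod_mul_distrib,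
    Finset.prod_pow_eq_pow_sum, hdeg]
  ring

def lineRestrict (a b : σ → R) : MvPolynomial σ R →ₐ[R] R[X] :=
  aeval fun i => Polynomial.C (a i) * Polynomial.X + Polynomial.C (b i)

@[simp]
theorem lineRestrict_X (a b : σ → R) (i : σ) :
    lineRestrict a b (X i) = Polynomial.C (a i) * Polynomial.X + Polynomial.C (b i) :=
  aeval_X _ i

theorem eval_lineRestrict (a b : σ → R) (f : MvPolynomial σ R) (r : R) :
    (lineRestrict a b f).eval r = eval (r • a + b) f := by
  induction f using MvPolynomial.induction_on with
  | C c => simp [lineRestrict]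
  | add p q hp hq => simp [hp, hq]
  | mul_X p i hp => simp [hp]; ring

theorem derivative_lineRestrict [Fintype σ] (a b : σ → R) (f : MvPolynomial σ R) :
    Polynomial.derivative (lineRestrict a b f) =
      ∑ i, Polynomial.C (a i) * lineRestrict a b (pderiv i f) := by
  classical
  induction f using MvPolynomial.induction_on with
  | C c => simp [lineRestrict]
  | add p q hp hq => simp [hp, hq, mul_add, Finset.sum_add_distrib]
  | mul_X p i hp =>
    have hterm : ∀ j, Polynomial.C (a j) * lineRestrict a b (pderiv j (p * X i)) =
        Polynomial.C (a j) * lineRestrict a b (pderiv j p) * lineRestrict a b (X i) +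
          if j = i then lineRestrict a b p * Polynomial.C (a i) else 0 := fun j => by
      by_cases h : j = i
      · subst h; simp [Derivation.leibniz]; ring
      · simp [Derivation.leibniz, pderiv_X, h]; ring
    simp only [hterm, Finset.sum_add_distrib, Finset.sum_ite_eq', Finset.mem_univ, if_true,
      ← Finset.sum_mul, map_mul, Polynomial.derivative_mul, hp]
    simp

theorem natDegree_lineRestrict_le (a b : σ → R) {f : MvPolynomial σ R} {n : ℕ}
    (hf : f.totalDegree ≤ n) : (lineRestrict a b f).natDegree ≤ n :=
  (aeval_natDegree_le f hf _ fun _ => Polynomial.natDegree_linear_le).trans_eq (mul_one n)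

end LineRestrict

theorem IsHomogeneous.eval_eq_zero_of_lineRestrict_eq_zero {K σ : Type*} [Field K] [Infinite K]
    {f : MvPolynomial σ K} {d : ℕ} (hf : f.IsHomogeneous d) {a b : σ → K}
    (h : lineRestrict a b f = 0) (u v : K) : eval (u • a + v • b) f = 0 := by
  have hchart : ∀ u v : K, v ≠ 0 → eval (u • a + v • b) f = 0 := fun u v hv => by
    have : u • a + v • b = v • ((u / v) • a + b) := by
      rw [smul_add, smul_smul, mul_div_cancel₀ u hv]
    rw [this, hf.eval_smul, ← eval_lineRestrict, h, Polynomial.eval_zero, mul_zero]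
  rcases eq_or_ne v 0 with rfl | hv
  · -- `x ↦ f (x • b + u • a)` is a polynomial vanishing at every `x ≠ 0`
    have hzero : lineRestrict b (u • a) f = 0 := by
      refine Polynomial.eq_zero_of_infinite_isRoot _ ((Set.finite_singleton 0).infinite_compl.mono
        fun x (hx : x ≠ 0) => ?_)
      rw [Set.mem_ofPred_eq, Polynomial.IsRoot.def, eval_lineRestrict, add_comm]
      exact hchart u x hx
    simpa [add_comm, ← eval_lineRestrict, hzero] using (eval_lineRestrict b (u • a) f 0).symm
  · exact hchart u v hv

end MvPolynomial

theorem exists_forall_sub_mul_ne_zero {K ι : Type*} [Field K] [Infinite K] [Fintype ι]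
    (s t : ι → K) (h : ∀ i, s i ≠ 0 ∨ t i ≠ 0) : ∃ c : K, ∀ i, t i - c * s i ≠ 0 := by
  classical
  obtain ⟨c, hc⟩ := Infinite.exists_notMem_finset (Finset.univ.image fun i => t i / s i)
  refine ⟨c, fun i hi => ?_⟩
  by_cases hs : s i = 0
  · exact (h i).resolve_left (not_not.mpr hs) (by simpa [hs] using hi)
  · exact hc (Finset.mem_image.mpr ⟨i, Finset.mem_univ i, by
      rw [div_eq_iff hs]; linear_combination hi⟩)

namespace MultAtLeast

variable {n : ℕ} {f : MvPolynomial (Fin n) ℂ} {p : Fin n → ℂ} {m : ℕ}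

theorem succ_iff :
    MultAtLeast f p (m + 1) ↔ eval p f = 0 ∧ ∀ i, MultAtLeast (pderiv i f) p m := by
  constructor
  · intro h
    exact ⟨h [] m.succ_pos, fun i l hl => h (i :: l) (by simpa using hl)⟩
  · rintro ⟨h₀, h⟩ (_ | ⟨i, l⟩) hl
    · exact h₀
    · exact h i l (by simpa using hl)

theorem zero : MultAtLeast f p 0 :=
  fun _ hl => absurd hl (Nat.not_lt_zero _)

theorem eval_eq_zero (h : MultAtLeast f p (m + 1)) : eval p f = 0 :=
  (succ_iff.mp h).1

theorem pderiv (h : MultAtLeast f p (m + 1)) (i : Fin n) : MultAtLeast (pderiv i f) p m :=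
  (succ_iff.mp h).2 i

theorem smul {d : ℕ} (hf : f.IsHomogeneous d) (h : MultAtLeast f p m) (c : ℂ) :
    MultAtLeast f (c • p) m := by
  induction m generalizing f d with
  | zero => exact zero
  | succ m ih =>
    rw [succ_iff, hf.eval_smul, h.eval_eq_zero, mul_zero]
    exact ⟨rfl, fun i => ih hf.pderiv (h.pderiv i)⟩

theorem isRoot_iterate_derivative_lineRestrict {a b : Fin n → ℂ} {r : ℂ}
    (h : MultAtLeast f (r • a + b) m) {j : ℕ} (hj : j < m) :
    (Polynomial.derivative^[j] (lineRestrict a b f)).IsRoot r := by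
  induction j generalizing f m with
  | zero =>
    obtain ⟨m, rfl⟩ := Nat.exists_eq_add_one_of_ne_zero hj.ne'
    simpa [eval_lineRestrict] using h.eval_eq_zero
  | succ j ih =>
    obtain ⟨m, rfl⟩ := Nat.exists_eq_add_one_of_ne_zero (by omega : m ≠ 0)
    rw [Function.iterate_succ_apply, derivative_lineRestrict, Polynomial.iterate_derivative_sum]
    simp only [Polynomial.iterate_derivative_C_mul, Polynomial.IsRoot.def,
      Polynomial.eval_finsetSum, Polynomial.eval_mul]
    refine Finset.sum_eq_zero fun i _ => ?_
    rw [ih (h.pderiv i) (by omega), mul_zero]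

theorem le_rootMultiplicity_lineRestrict {a b : Fin n → ℂ} {r : ℂ}
    (h : MultAtLeast f (r • a + b) m) (hf : lineRestrict a b f ≠ 0) :
    m ≤ (lineRestrict a b f).rootMultiplicity r := by
  cases m with
  | zero => exact Nat.zero_le _
  | succ m =>
    exact Polynomial.lt_rootMultiplicity_of_isRoot_iterate_derivative hf fun j hj =>
      h.isRoot_iterate_derivative_lineRestrict (Nat.lt_succ_of_le hj)

theorem lineRestrict_eq_zero {k : ℕ}
    {a b : Fin n → ℂ} {r : Fin k → ℂ} (hr : Function.Injective r)
    (h : ∀ i, MultAtLeast f (r i • a + b) m) (hdeg : f.totalDegree < m * k) :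
    lineRestrict a b f = 0 := by
  classical
  by_contra hne
  have hroots := Polynomial.mul_card_le_natDegree_of_le_rootMultiplicity
    (s := Finset.univ.image r) fun x hx => by
      obtain ⟨i, -, rfl⟩ := Finset.mem_image.mp hx
      exact (h i).le_rootMultiplicity_lineRestrict hne
  rw [Finset.card_image_of_injective _ hr, Finset.card_fin] at hroots
  have := natDegree_lineRestrict_le a b (le_refl f.totalDegree)
  omega

theorem eval_eq_zero_on_line {d k : ℕ}
    (hf : f.IsHomogeneous d) {a b : Fin n → ℂ} {s t : Fin k → ℂ}
    (hne : ∀ i, s i • a + t i • b ≠ 0)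
    (hdist : ∀ i j, i ≠ j → ∀ c : ℂ, s i • a + t i • b ≠ c • (s j • a + t j • b))
    (hmult : ∀ i, MultAtLeast f (s i • a + t i • b) m) (hd : d < m * k) (u v : ℂ) :
    eval (u • a + v • b) f = 0 := by
  -- pass to the chart `r ↦ r • (a + c • b) + b`, whose point at infinity is none of the points
  obtain ⟨c, hc⟩ := exists_forall_sub_mul_ne_zero s t fun i => by
    by_contra! h
    exact hne i (by simp [h])
  have hchart : ∀ x y : ℂ, x • a + y • b = x • (a + c • b) + (y - c * x) • b := fun x y => by
    module
  set r : Fin k → ℂ := fun i => s i / (t i - c * s i)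
  have hpt : ∀ i, s i • a + t i • b = (t i - c * s i) • (r i • (a + c • b) + b) := fun i => by
    rw [smul_add, smul_smul, mul_div_cancel₀ _ (hc i)]
    module
  have hr : Function.Injective r := fun i j hij => by
    by_contra hij'
    refine hdist i j hij' ((t i - c * s i) / (t j - c * s j)) ?_
    rw [hpt i, hpt j, hij, smul_smul, div_mul_cancel₀ _ (hc j)]
  have hmult' : ∀ i, MultAtLeast f (r i • (a + c • b) + b) m := fun i => by
    simpa [hpt i, smul_smul, hc i] using (hmult i).smul hf (t i - c * s i)⁻¹
  rw [hchart]
  exact hf.eval_eq_zero_of_lineRestrict_eq_zero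
    (lineRestrict_eq_zero hr hmult' (hf.totalDegree_le.trans_lt hd)) _ _

theorem two_on_line_of_three {d k : ℕ}
    (hf : f.IsHomogeneous d) (hk : 2 ≤ k) {a b : Fin n → ℂ} {s t : Fin k → ℂ}
    (hdist : ∀ i j, i ≠ j → ∀ c : ℂ, s i • a + t i • b ≠ c • (s j • a + t j • b))
    (hmult : ∀ i, MultAtLeast f (s i • a + t i • b) 3) (hdk : d - 1 < 2 * k) (u v : ℂ) :
    MultAtLeast f (u • a + v • b) 2 := by
  have : Nontrivial (Fin k) := Fin.nontrivial_iff_two_le.mpr hk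
  have hne : ∀ i, s i • a + t i • b ≠ 0 := fun i h₀ => by
    obtain ⟨j, hj⟩ := exists_ne i
    exact hdist i j hj.symm 0 (by rw [h₀, zero_smul])
  refine succ_iff.mpr ⟨eval_eq_zero_on_line hf hne hdist hmult (by omega) u v,
    fun i => succ_iff.mpr ⟨?_, fun _ => zero⟩⟩
  exact eval_eq_zero_on_line hf.pderiv hne hdist (fun j => (hmult j).pderiv i) hdk u v

end MultAtLeast

theorem LinearIndependent.injective_mk_add_smul {K V : Type*} [Field K] [AddCommGroup V]
    [Module K V] {a b : V} (hab : LinearIndependent K ![a, b])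
    (hne : ∀ c : K, a + c • b ≠ 0) :
    Function.Injective fun c => Projectivization.mk K (a + c • b) (hne c) := by
  intro c c' hcc'
  obtain ⟨w, hw⟩ := (Projectivization.mk_eq_mk_iff K _ _ (hne c) (hne c')).mp hcc'
  have hzero : ((w : K) - 1) • a + ((w : K) * c' - c) • b = 0 := by
    rw [← sub_eq_zero.mpr hw, Units.smul_def]
    module
  obtain ⟨hw1, hc⟩ := LinearIndependent.pair_iff.mp hab _ _ hzero
  rw [sub_eq_zero.mp hw1, one_mul, sub_eq_zero] at hc
  exact hc.symm

theorem infinite_singSet_of_line {f : MvPolynomial (Fin 4) ℂ} {a b : Fin 4 → ℂ}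
    (hab : LinearIndependent ℂ ![a, b]) (h : ∀ u v : ℂ, SingularAt f (u • a + v • b)) :
    (SingSet f).Infinite := by
  have hne : ∀ c : ℂ, a + c • b ≠ 0 := fun c h₀ =>
    one_ne_zero (LinearIndependent.pair_iff.mp hab 1 c (by rwa [one_smul])).1
  refine Set.infinite_of_injective_forall_mem (hab.injective_mk_add_smul hne) fun c => ?_
  obtain ⟨w, hw⟩ := Projectivization.exists_smul_eq_mk_rep ℂ (a + c • b) (hne c)
  show SingularAt f (Projectivization.mk ℂ (a + c • b) (hne c)).rep
  rw [← hw, Units.smul_def, smul_add, smul_smul]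
  exact h _ _

/-- If a surface `{f = 0}` of degree `d ≥ 3` has `k ≥ 2` distinct points of
multiplicity `≥ 3` on a line `L`, and `2k > d − 1`, then every point of `L` is a singular
point of the surface.  Consequently a degree-`d` surface whose only singularities are
ordinary triple points has at most `⌊(d−1)/2⌋` triple points on any line; for `d = 6`,
at most two triple points lie on a line. -/
theorem triple_points_on_a_line :
    (∀ (d k : ℕ), 3 ≤ d → 2 ≤ k →
      ∀ f : MvPolynomial (Fin 4) ℂ, f ≠ 0 → f.IsHomogeneous d →
      ∀ a b : Fin 4 → ℂ, LinearIndependent ℂ ![a, b] →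
      ∀ s t : Fin k → ℂ,
        (∀ i j : Fin k, i ≠ j → ∀ c : ℂ,
          s i • a + t i • b ≠ c • (s j • a + t j • b)) →
        (∀ i : Fin k, MultAtLeast f (s i • a + t i • b) 3) →
        d - 1 < 2 * k →
        ∀ u v : ℂ, SingularAt f (u • a + v • b)) ∧
    (∀ (d k : ℕ), 3 ≤ d →
      ∀ f : MvPolynomial (Fin 4) ℂ, f ≠ 0 → f.IsHomogeneous d →
      (SingSet f).Finite → (∀ P ∈ SingSet f, OrdinaryTriplePointAt d f P.rep) →
      ∀ a b : Fin 4 → ℂ, LinearIndependent ℂ ![a, b] →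
      ∀ s t : Fin k → ℂ,
        (∀ i j : Fin k, i ≠ j → ∀ c : ℂ,
          s i • a + t i • b ≠ c • (s j • a + t j • b)) →
        (∀ i : Fin k, OrdinaryTriplePointAt d f (s i • a + t i • b)) →
        k ≤ (d - 1) / 2 ∧ (d = 6 → k ≤ 2)) := by
  refine ⟨fun d k _ hk f _ hf a b _ s t hdist hmult hdk u v =>
    MultAtLeast.two_on_line_of_three hf hk hdist hmult hdk u v, ?_⟩
  intro d k hd f _ hf hfin _ a b hab s t hdist htri
  have hk : k ≤ (d - 1) / 2 := by
    by_contra! hk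
    exact infinite_singSet_of_line hab (MultAtLeast.two_on_line_of_three hf (by omega) hdist
      (fun i => (htri i).1) (by omega)) hfin
  exact ⟨hk, fun h6 => by omega⟩
end
end

section
/- Let f ∈ ℂ[x₀,x₁,x₂,x₃] be a nonzero homogeneous polynomial of degree 3 such that the surface X = {f = 0} has an ordinary triple point at P. Then, after a linear change of coordinates taking a representative of P to (0,0,0,1), f is a polynomial in x₀, x₁, x₂ only (X is a cone with vertex P), f is a nonsingular ternary cubic form (so X is the cone over a smooth plane cubic curve), and P is the unique singular point of X. In particular μ₃(3) = 1. -/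
open MvPolynomial

noncomputable section

/-! Move `P` to `e = (0:0:0:1)` and write `f = ∑ⱼ x₃^(3-j) gⱼ`. By the chain rule all partials
of order `< 3` still vanish at `e`, and an order-`j` partial in `x₀, x₁, x₂` evaluated at `e`
sees only the corresponding partial of `gⱼ`; by Euler's identity this forces `g₀ = g₁ = g₂ = 0`,
so `f = g₃` is a cone over the plane cubic `g₃`. At a singular point `r` of the cone,
`(r₀, r₁, r₂)` is a common zero of the partials of the nonsingular `g₃`, so `r` is a multiple
of `e`. -/

open Matrix

namespace MvPolynomial

theorem pderiv_aeval {R σ τ : Type*} [CommSemiring R] [Fintype σ]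
    (g : σ → MvPolynomial τ R) (i : τ) (f : MvPolynomial σ R) :
    pderiv i (aeval g f) = ∑ j, pderiv i (g j) * aeval g (pderiv j f) := by
  classical
  induction f using MvPolynomial.induction_on with
  | C a => simp
  | add p q hp hq => simp only [map_add, hp, hq, mul_add, Finset.sum_add_distrib]
  | mul_X p k hp =>
    simp only [map_mul, aeval_X, pderiv_mul, hp, map_add, mul_add, Finset.sum_add_distrib,
      Finset.sum_mul, pderiv_X]
    congr 1
    · exact Finset.sum_congr rfl fun j _ => by ring
    · rw [Finset.sum_eq_single k (fun j _ hj => by simp [hj]) (by simp)]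
      simp [mul_comm]

theorem IsHomogeneous.eval_zero {σ R : Type*} [CommSemiring R]
    {h : MvPolynomial σ R} {k : ℕ} (hh : h.IsHomogeneous k) (hk : k ≠ 0) : eval 0 h = 0 := by
  rw [MvPolynomial.eval_zero]
  exact hh.coeff_eq_zero (by simpa using hk.symm)

end MvPolynomial

section ChangeOfCoordinates

variable {n : ℕ}

theorem eval_substMatrix (B : Matrix (Fin n) (Fin n) ℂ) (q : Fin n → ℂ)
    (f : MvPolynomial (Fin n) ℂ) : eval q (substMatrix B f) = eval (B *ᵥ q) f := by
  refine (eval₂Hom_bind₁ _ _ _ f).trans (congrArg (eval · f) ?_)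
  ext i
  simp [Matrix.mulVec, dotProduct]

theorem pderiv_substMatrix (B : Matrix (Fin n) (Fin n) ℂ) (i : Fin n)
    (f : MvPolynomial (Fin n) ℂ) :
    pderiv i (substMatrix B f) = ∑ j, C (B j i) * substMatrix B (pderiv j f) := by
  classical
  simp only [substMatrix, pderiv_aeval, map_sum, pderiv_C_mul, pderiv_X]
  simp [Pi.single_apply]

end ChangeOfCoordinates

section PDerivList

variable {n : ℕ}

@[simp] theorem pderivList_nil (f : MvPolynomial (Fin n) ℂ) : pderivList [] f = f := rfl

@[simp] theorem pderivList_cons (i : Fin n) (l : List (Fin n)) (f : MvPolynomial (Fin n) ℂ) :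
    pderivList (i :: l) f = pderivList l (pderiv i f) := rfl

theorem pderivList_sum {ι : Type*} (s : Finset ι) (l : List (Fin n))
    (h : ι → MvPolynomial (Fin n) ℂ) :
    pderivList l (∑ j ∈ s, h j) = ∑ j ∈ s, pderivList l (h j) := by
  induction l generalizing h with
  | nil => rfl
  | cons i l ih => simp only [pderivList_cons, map_sum, ih]

theorem pderivList_C_mul (l : List (Fin n)) (a : ℂ) (f : MvPolynomial (Fin n) ℂ) :
    pderivList l (C a * f) = C a * pderivList l f := by
  induction l generalizing f with
  | nil => rfl
  | cons i l ih => simp only [pderivList_cons, pderiv_C_mul, ih]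

theorem pderivList_zero (l : List (Fin n)) : pderivList l (0 : MvPolynomial (Fin n) ℂ) = 0 := by
  simpa using pderivList_C_mul l 0 0

theorem MvPolynomial.IsHomogeneous.pderivList {f : MvPolynomial (Fin n) ℂ} {k : ℕ}
    (hf : f.IsHomogeneous k) (l : List (Fin n)) :
    (_root_.pderivList l f).IsHomogeneous (k - l.length) := by
  induction l generalizing f k with
  | nil => exact hf
  | cons i l ih =>
    rw [pderivList_cons, List.length_cons, add_comm, ← Nat.sub_sub]
    exact ih hf.pderiv

theorem eval_pderivList_substMatrix_eq_zero (B : Matrix (Fin n) (Fin n) ℂ) (q : Fin n → ℂ)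
    (l : List (Fin n)) {f : MvPolynomial (Fin n) ℂ}
    (hf : ∀ l' : List (Fin n), l'.length = l.length → eval (B *ᵥ q) (pderivList l' f) = 0) :
    eval q (pderivList l (substMatrix B f)) = 0 := by
  induction l generalizing f with
  | nil => simpa [eval_substMatrix] using hf [] rfl
  | cons i l ih =>
    rw [pderivList_cons, pderiv_substMatrix, pderivList_sum, map_sum]
    refine Finset.sum_eq_zero fun j _ => ?_
    rw [pderivList_C_mul, map_mul,
      ih fun l' hl' => by simpa using hf (j :: l') (by simp [hl']), mul_zero]

theorem MultAtLeast.substMatrix {f : MvPolynomial (Fin n) ℂ} {B : Matrix (Fin n) (Fin n) ℂ}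
    {q : Fin n → ℂ} {m : ℕ} (hf : MultAtLeast f (B *ᵥ q) m) :
    MultAtLeast (substMatrix B f) q m := fun l hl =>
  eval_pderivList_substMatrix_eq_zero B q l fun l' hl' => hf l' (hl' ▸ hl)

end PDerivList

theorem MvPolynomial.IsHomogeneous.eq_zero_of_eval_zero_pderivList {n : ℕ}
    {h : MvPolynomial (Fin n) ℂ} {k : ℕ} (hh : h.IsHomogeneous k)
    (hpd : ∀ l : List (Fin n), l.length = k → eval 0 (_root_.pderivList l h) = 0) : h = 0 := by
  induction k generalizing h with
  | zero =>
    rw [← totalDegree_zero_iff_isHomogeneous, totalDegree_eq_zero_iff_eq_C] at hh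
    have h0 := hpd [] rfl
    rw [pderivList_nil, hh, eval_C] at h0
    rw [hh, h0, map_zero]
  | succ k ih =>
    have hpderiv : ∀ i, pderiv i h = 0 := fun i =>
      ih hh.pderiv fun l hl => hpd (i :: l) (by simp [hl])
    have euler := hh.sum_X_mul_pderiv
    simp only [hpderiv, mul_zero, Finset.sum_const_zero] at euler
    exact (smul_eq_zero.mp euler.symm).resolve_left k.succ_ne_zero

section Cone

variable {n : ℕ}

theorem pderivList_map_castSucc_X_last_pow_mul_rename (l : List (Fin n)) (a : ℕ)
    (h : MvPolynomial (Fin n) ℂ) :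
    pderivList (l.map Fin.castSucc) (X (Fin.last n) ^ a * rename Fin.castSucc h) =
      X (Fin.last n) ^ a * rename Fin.castSucc (pderivList l h) := by
  induction l generalizing h with
  | nil => rfl
  | cons i l ih =>
    rw [List.map_cons, pderivList_cons, pderivList_cons, ← ih, pderiv_mul, pderiv_pow,
      pderiv_X_of_ne (Fin.castSucc_lt_last i).ne', pderiv_rename (Fin.castSucc_injective n)]
    simp

theorem eval_single_last_X_last_pow_mul_rename (a : ℕ) (h : MvPolynomial (Fin n) ℂ) :
    eval (Pi.single (Fin.last n) 1) (X (Fin.last n) ^ a * rename Fin.castSucc h) = eval 0 h := by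
  have : (Pi.single (Fin.last n) 1 : Fin (n + 1) → ℂ) ∘ Fin.castSucc = 0 := by
    ext i; simp [(Fin.castSucc_lt_last i).ne]
  simp [eval_rename, this]

theorem eq_zero_of_multAtLeast_single_last {d m : ℕ} {g : ℕ → MvPolynomial (Fin n) ℂ}
    (hg : ∀ j, (g j).IsHomogeneous j)
    (hm : MultAtLeast (∑ j ∈ Finset.range (d + 1),
      X (Fin.last n) ^ (d - j) * rename Fin.castSucc (g j)) (Pi.single (Fin.last n) 1) m)
    {j : ℕ} (hjm : j < m) (hjd : j ≤ d) : g j = 0 := by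
  induction j using Nat.strong_induction_on with
  | _ j ih =>
  refine IsHomogeneous.eq_zero_of_eval_zero_pderivList (hg j) fun l hl => ?_
  have hj := hm (l.map Fin.castSucc) (by simpa [hl])
  simp only [pderivList_sum, map_sum, pderivList_map_castSucc_X_last_pow_mul_rename,
    eval_single_last_X_last_pow_mul_rename] at hj
  rwa [Finset.sum_eq_single j _ fun hnot => (hnot (Finset.mem_range.mpr (by omega))).elim] at hj
  -- `g i` vanishes for `i < j` by induction; for `i > j` the partial has positive degree.
  intro i hi hij
  rcases hij.lt_or_gt with hlt | hgt
  · rw [ih i hlt (hlt.trans hjm) (hlt.le.trans hjd), pderivList_zero, map_zero]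
  · exact IsHomogeneous.eval_zero (IsHomogeneous.pderivList (hg i) l) (by omega)

theorem sum_X_last_pow_mul_rename_eq_of_multAtLeast {d : ℕ} {g : ℕ → MvPolynomial (Fin n) ℂ}
    (hg : ∀ j, (g j).IsHomogeneous j)
    (hm : MultAtLeast (∑ j ∈ Finset.range (d + 1),
      X (Fin.last n) ^ (d - j) * rename Fin.castSucc (g j)) (Pi.single (Fin.last n) 1) d) :
    ∑ j ∈ Finset.range (d + 1), X (Fin.last n) ^ (d - j) * rename Fin.castSucc (g j) =
      rename Fin.castSucc (g d) := by
  rw [Finset.sum_eq_single d _ (by simp)]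
  · simp
  · intro j hj hjd
    have hj_lt := Finset.mem_range.mp hj
    rw [eq_zero_of_multAtLeast_single_last hg hm (by omega) (by omega)]
    simp

theorem NowhereSingular.eq_smul_single_last {c : MvPolynomial (Fin n) ℂ} (hc : NowhereSingular c)
    {r : Fin (n + 1) → ℂ} (hr : MultAtLeast (rename Fin.castSucc c) r 2) :
    r = r (Fin.last n) • Pi.single (Fin.last n) 1 := by
  have hinit : r ∘ Fin.castSucc = 0 := by
    by_contra hne
    obtain ⟨i, hi⟩ := hc _ hne
    apply hi
    simpa [pderiv_rename (Fin.castSucc_injective n), eval_rename] using hr [i.castSucc] (by simp)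
  ext i
  induction i using Fin.lastCases with
  | last => simp
  | cast i => simpa [(Fin.castSucc_lt_last i).ne] using congrFun hinit i

end Cone

theorem cubic_triple_point_general
    (f : MvPolynomial (Fin 4) ℂ)
    (p : Fin 4 → ℂ) (htp : OrdinaryTriplePointAt 3 f p) :
    (∃ B : Matrix (Fin 4) (Fin 4) ℂ, IsUnit B.det ∧ B.mulVec ![0, 0, 0, 1] = p ∧
      ∃ c : MvPolynomial (Fin 3) ℂ, c.IsHomogeneous 3 ∧ NowhereSingular c ∧
        substMatrix B f = MvPolynomial.rename Fin.castSucc c) ∧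
    (∀ q : Fin 4 → ℂ, q ≠ 0 → SingularAt f q → ∃ c : ℂ, q = c • p) := by
  obtain ⟨hmult, -, B, hB, hBe, g, hg, hF, hns⟩ := htp
  have he : (![0, 0, 0, 1] : Fin 4 → ℂ) = Pi.single (Fin.last 3) 1 := by
    ext i; fin_cases i <;> rfl
  rw [he] at hBe
  have hcone : substMatrix B f = rename Fin.castSucc (g 3) := by
    have hmult' : MultAtLeast (substMatrix B f) (Pi.single (Fin.last 3) 1) 3 :=
      MultAtLeast.substMatrix (hBe ▸ hmult)
    rw [hF] at hmult' ⊢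
    exact sum_X_last_pow_mul_rename_eq_of_multAtLeast hg hmult'
  refine ⟨⟨B, hB, he ▸ hBe, g 3, hg 3, hns, hcone⟩, fun q _ hq => ⟨(B⁻¹ *ᵥ q) (Fin.last 3), ?_⟩⟩
  have hr : B *ᵥ (B⁻¹ *ᵥ q) = q := by
    rw [mulVec_mulVec, mul_nonsing_inv _ hB, one_mulVec]
  have hsing := MultAtLeast.substMatrix (hr.symm ▸ hq : SingularAt f (B *ᵥ (B⁻¹ *ᵥ q)))
  rw [hcone] at hsing
  conv_lhs => rw [← hr, hns.eq_smul_single_last hsing, mulVec_smul, hBe]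

/-- A cubic surface with an ordinary triple point at `P` is, after a linear
change of coordinates moving `(0:0:0:1)` to `P`, the cone over a smooth plane cubic curve
with vertex `P` (the equation involves only `x₀, x₁, x₂` and is a nonsingular ternary
cubic form), and `P` is the unique singular point of the surface.  In particular
`μ₃(3) = 1`. -/
theorem cubic_triple_point
    (f : MvPolynomial (Fin 4) ℂ) (hf : f ≠ 0) (hhom : f.IsHomogeneous 3)
    (p : Fin 4 → ℂ) (hp : p ≠ 0) (htp : OrdinaryTriplePointAt 3 f p) :
    (∃ B : Matrix (Fin 4) (Fin 4) ℂ, IsUnit B.det ∧ B.mulVec ![0, 0, 0, 1] = p ∧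
      ∃ c : MvPolynomial (Fin 3) ℂ, c.IsHomogeneous 3 ∧ NowhereSingular c ∧
        substMatrix B f = MvPolynomial.rename Fin.castSucc c) ∧
    (∀ q : Fin 4 → ℂ, q ≠ 0 → SingularAt f q → ∃ c : ℂ, q = c • p) :=
  cubic_triple_point_general f p htp
end
end

section
/- Let f ∈ ℂ[x,y,z,w] be a nonzero homogeneous polynomial of degree d, and suppose that for i = 1, …, 4 the i-th coordinate vertex of ℙ³(ℂ) has multiplicity ≥ mᵢ on {f = 0} (all partial derivatives of f of order < mᵢ vanish at the vertex; mᵢ = 0 allowed). Then there exists a homogeneous polynomial g ∈ ℂ[x,y,z,w] of degree 3d − m₁ − m₂ − m₃ − m₄ with f(yzw, xzw, xyw, xyz) = x^{m₁} y^{m₂} z^{m₃} w^{m₄} · g(x,y,z,w). If moreover the multiplicity of {f = 0} at the i-th vertex is exactly mᵢ (some partial derivative of f of order mᵢ does not vanish there), then the i-th coordinate does not divide g. In particular, the reciprocal transformation (x : y : z : w) ↦ (1/x : 1/y : 1/z : 1/w) maps a surface of degree d with multiplicities m₁, …, m₄ at the fundamental points to a surface of degree 3d − m₁ − ⋯ −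 m₄. -/
open MvPolynomial

noncomputable section

/-! The monomial `X^a` of degree `d` has multiplicity `offDegree i a = d - aᵢ` at the `i`-th
vertex, and a homogeneous `f` has multiplicity there the least `offDegree i a` over its support:
the derivative `∂^(a - aᵢ eᵢ) f` at the vertex is a nonzero multiple of the coefficient of `X^a`.
The reciprocal substitution sends `X^a` to `X^b` with `bⱼ = offDegree j a`, so the multiplicity
`mⱼ` at the `j`-th vertex is exactly the power of `Xⱼ` common to all monomials of the image, and
the exponents of `X^a` are recovered from `b` as `aⱼ = d - bⱼ`. -/

namespace Finsupp

open Finset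

variable {σ : Type*} [Fintype σ] [DecidableEq σ]

/-- The order of vanishing of the monomial `X^a` at the `i`-th coordinate vertex. -/
def offDegree (i : σ) (a : σ →₀ ℕ) : ℕ := ∑ j ∈ univ.erase i, a j

lemma apply_add_offDegree (i : σ) (a : σ →₀ ℕ) : a i + offDegree i a = a.degree := by
  rw [degree_eq_sum]
  exact Finset.add_sum_erase _ _ (mem_univ i)

lemma offDegree_add (i : σ) (a b : σ →₀ ℕ) :
    offDegree i (a + b) = offDegree i a + offDegree i b :=
  sum_add_distrib

lemma offDegree_single_self (i : σ) (n : ℕ) : offDegree i (single i n) = 0 := by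
  have := apply_add_offDegree i (single i n)
  rw [degree_single, single_eq_same] at this
  omega

lemma offDegree_single_one_le (i j : σ) : offDegree i (single j 1) ≤ 1 := by
  have := apply_add_offDegree i (single j 1)
  rw [degree_single] at this
  omega

lemma offDegree_single_one_of_ne {i j : σ} (h : j ≠ i) : offDegree i (single j 1) = 1 := by
  have := apply_add_offDegree i (single j 1)
  rwa [degree_single, single_eq_of_ne h.symm, zero_add] at this

lemma eq_single_of_offDegree_eq_zero {i : σ} {a : σ →₀ ℕ} (h : offDegree i a = 0) :
    a = single i (a i) := by
  ext j
  rcases eq_or_ne j i with rfl | hj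
  · simp
  · rw [single_eq_of_ne hj]
    exact sum_eq_zero_iff.mp h j (mem_erase.mpr ⟨hj, mem_univ j⟩)

def recipExponent (a : σ →₀ ℕ) : σ →₀ ℕ :=
  equivFunOnFinite.symm fun j => offDegree j a

@[simp]
lemma recipExponent_apply (a : σ →₀ ℕ) (j : σ) : recipExponent a j = offDegree j a := rfl

lemma degree_recipExponent (a : σ →₀ ℕ) :
    (recipExponent a).degree = (Fintype.card σ - 1) * a.degree := by
  have h : ∑ j, (a j + offDegree j a) = Fintype.card σ * a.degree := by
    simp [apply_add_offDegree]
  rw [sum_add_distrib, ← degree_eq_sum] at h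
  rw [degree_eq_sum, Nat.sub_one_mul]
  simp only [recipExponent_apply]
  omega

lemma recipExponent_injective_of_degree_eq {a b : σ →₀ ℕ} (hab : a.degree = b.degree)
    (h : recipExponent a = recipExponent b) : a = b := by
  ext j
  have ha := apply_add_offDegree j a
  have hb := apply_add_offDegree j b
  have hj : offDegree j a = offDegree j b := by
    rw [← recipExponent_apply, h, recipExponent_apply]
  omega

end Finsupp

namespace MvPolynomial

open Finset Finsupp

variable {σ R : Type*}

lemma IsHomogeneous.degree_eq_of_mem_support [CommSemiring R] {f : MvPolynomial σ R} {d : ℕ}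
    (hf : f.IsHomogeneous d) {a : σ →₀ ℕ} (ha : a ∈ f.support) : a.degree = d :=
  (hf.degree_eq_sum_deg_support ha).symm

variable [Fintype σ] [DecidableEq σ]

lemma prod_piSingle_one_pow [CommMonoidWithZero R] (i : σ) (a : σ →₀ ℕ) :
    ∏ j, (Pi.single i 1 : σ → R) j ^ a j = 0 ^ offDegree i a := by
  rw [← mul_prod_erase univ _ (mem_univ i), Pi.single_eq_same, one_pow, one_mul, offDegree,
    ← prod_pow_eq_pow_sum]
  exact prod_congr rfl fun j hj => by rw [Pi.single_eq_of_ne (ne_of_mem_erase hj)]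

variable [CommSemiring R]

lemma eval_piSingle_one (i : σ) (f : MvPolynomial σ R) :
    eval (Pi.single i 1) f = ∑ a ∈ f.support, coeff a f * 0 ^ offDegree i a := by
  simp only [eval_eq', prod_piSingle_one_pow]

lemma IsHomogeneous.eval_piSingle_one {f : MvPolynomial σ R} {d : ℕ} (hf : f.IsHomogeneous d)
    (i : σ) : eval (Pi.single i 1) f = coeff (single i d) f := by
  rw [MvPolynomial.eval_piSingle_one, Finset.sum_eq_single (single i d)]
  · rw [offDegree_single_self, pow_zero, mul_one]
  · intro a ha hne
    suffices offDegree i a ≠ 0 by rw [zero_pow this, mul_zero]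
    intro h
    have hdeg := apply_add_offDegree i a
    rw [h, add_zero, hf.degree_eq_of_mem_support ha] at hdeg
    exact hne (hdeg.symm ▸ eq_single_of_offDegree_eq_zero h)
  · intro h
    rw [notMem_support_iff.mp h, zero_mul]

end MvPolynomial

section Multiplicity

open MvPolynomial Finset Finsupp

variable {n : ℕ}

lemma eval_pderivList_piSingle_one_eq_zero {i : Fin n} {m : ℕ} {f : MvPolynomial (Fin n) ℂ}
    (hf : ∀ a ∈ f.support, m ≤ offDegree i a) {l : List (Fin n)} (hl : l.length < m) :
    eval (Pi.single i 1) (pderivList l f) = 0 := by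
  induction l generalizing m f with
  | nil =>
    refine (eval_piSingle_one i f).trans (sum_eq_zero fun a ha => ?_)
    have := hf a ha
    rw [List.length_nil] at hl
    have : offDegree i a ≠ 0 := by omega
    rw [zero_pow this, mul_zero]
  | cons k l ih =>
    refine ih (m := m - 1) (fun b hb => ?_) (by rw [List.length_cons] at hl; omega)
    have hb' : b + single k 1 ∈ f.support := by
      rw [MvPolynomial.mem_support_iff, coeff_pderiv] at hb
      exact MvPolynomial.mem_support_iff.mpr (left_ne_zero_of_mul hb)
    have := hf _ hb'
    have := offDegree_single_one_le i k
    rw [offDegree_add] at *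
    omega

lemma exists_pderivList_eval_piSingle_one_ne_zero {d : ℕ} {f : MvPolynomial (Fin n) ℂ}
    (hf : f.IsHomogeneous d) {a : Fin n →₀ ℕ} (ha : coeff a f ≠ 0) (i : Fin n) :
    ∃ l : List (Fin n), l.length = offDegree i a ∧
      eval (Pi.single i 1) (pderivList l f) ≠ 0 := by
  induction hk : offDegree i a generalizing d f a with
  | zero =>
    refine ⟨[], rfl, ?_⟩
    have hdeg := apply_add_offDegree i a
    rw [hk, add_zero, hf.degree_eq_of_mem_support (MvPolynomial.mem_support_iff.mpr ha)] at hdeg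
    rwa [pderivList, List.foldl_nil, hf.eval_piSingle_one, ← hdeg,
      ← eq_single_of_offDegree_eq_zero hk]
  | succ k ih =>
    obtain ⟨j, hj, hj0⟩ := exists_ne_zero_of_sum_ne_zero (hk.trans_ne k.succ_ne_zero)
    have hji : j ≠ i := ne_of_mem_erase hj
    set b := a - single j 1
    have hab : b + single j 1 = a := tsub_add_cancel_of_le (single_le_iff.mpr (by omega))
    have hb : coeff b (pderiv j f) ≠ 0 := by
      rw [coeff_pderiv, hab]
      exact mul_ne_zero ha (Nat.cast_add_one_ne_zero _)
    have hbk : offDegree i b = k := by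
      rw [← hab, offDegree_add, offDegree_single_one_of_ne hji] at hk
      omega
    obtain ⟨l, hl, hne⟩ := ih hf.pderiv hb hbk
    exact ⟨j :: l, by simp [hl], hne⟩

lemma multAtLeast_piSingle_one_iff {d : ℕ} {f : MvPolynomial (Fin n) ℂ}
    (hf : f.IsHomogeneous d) {i : Fin n} {m : ℕ} :
    MultAtLeast f (Pi.single i 1) m ↔ ∀ a ∈ f.support, m ≤ offDegree i a := by
  refine ⟨fun h a ha => ?_, fun h l hl => eval_pderivList_piSingle_one_eq_zero h hl⟩
  by_contra! hlt
  obtain ⟨l, hl, hne⟩ :=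
    exists_pderivList_eval_piSingle_one_ne_zero hf (MvPolynomial.mem_support_iff.mp ha) i
  exact hne (h l (hl ▸ hlt))

end Multiplicity

namespace MvPolynomial

open Finset Finsupp

variable {σ R : Type*} [DecidableEq σ] [CommSemiring R]

lemma coeff_eq_zero_of_X_dvd {p : MvPolynomial σ R} {i : σ} (h : X i ∣ p) {b : σ →₀ ℕ}
    (hb : b i = 0) : coeff b p = 0 := by
  obtain ⟨q, rfl⟩ := h
  rw [coeff_X_mul', if_neg (by simpa using hb)]

variable [Fintype σ]

lemma aeval_prod_erase_X_monomial (a : σ →₀ ℕ) (c : R) :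
    aeval (fun i => ∏ j ∈ univ.erase i, (X j : MvPolynomial σ R)) (monomial a c)
      = monomial (recipExponent a) c := by
  rw [aeval_monomial, monomial_eq, Finsupp.prod_fintype _ _ fun _ => pow_zero _,
    Finsupp.prod_fintype _ _ fun _ => pow_zero _, algebraMap_eq]
  congr 1
  simp_rw [← Finset.prod_pow]
  rw [prod_comm' (t' := univ) (s' := fun j => univ.erase j) (by simp [ne_comm])]
  simp [prod_pow_eq_pow_sum, offDegree]

lemma aeval_prod_erase_X (f : MvPolynomial σ R) :
    aeval (fun i => ∏ j ∈ univ.erase i, (X j : MvPolynomial σ R)) f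
      = ∑ a ∈ f.support, monomial (recipExponent a) (coeff a f) := by
  conv_lhs => rw [f.as_sum]
  simp only [map_sum, aeval_prod_erase_X_monomial]

lemma exists_aeval_prod_erase_X_eq_monomial_mul {d : ℕ} {f : MvPolynomial σ R}
    (hf : f.IsHomogeneous d) {M : σ →₀ ℕ} (hM : ∀ a ∈ f.support, M ≤ recipExponent a) :
    ∃ g : MvPolynomial σ R, g.IsHomogeneous ((Fintype.card σ - 1) * d - M.degree) ∧
      aeval (fun i => ∏ j ∈ univ.erase i, (X j : MvPolynomial σ R)) f = monomial M 1 * g ∧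
      ∀ a ∈ f.support, coeff (recipExponent a - M) g = coeff a f := by
  refine ⟨∑ a ∈ f.support, monomial (recipExponent a - M) (coeff a f), ?_, ?_,
    fun a ha => ?_⟩
  · refine IsHomogeneous.sum _ _ _ fun a ha => isHomogeneous_monomial _ ?_
    have := congrArg degree (tsub_add_cancel_of_le (hM a ha))
    rw [map_add, degree_recipExponent, hf.degree_eq_of_mem_support ha] at this
    omega
  · rw [aeval_prod_erase_X, Finset.mul_sum]
    refine sum_congr rfl fun a ha => ?_
    rw [monomial_mul, one_mul, add_tsub_cancel_of_le (hM a ha)]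
  · rw [coeff_sum, sum_eq_single_of_mem a ha fun b hb hne => ?_, coeff_monomial, if_pos rfl]
    rw [coeff_monomial, if_neg]
    rw [tsub_left_inj (hM b hb) (hM a ha)]
    refine fun h => hne (recipExponent_injective_of_degree_eq ?_ h)
    rw [hf.degree_eq_of_mem_support ha, hf.degree_eq_of_mem_support hb]

end MvPolynomial

theorem reciprocal_transformation_general
    (d : ℕ) (f : MvPolynomial (Fin 4) ℂ) (hhom : f.IsHomogeneous d)
    (m : Fin 4 → ℕ)
    (hmult : ∀ i, MultAtLeast f (Pi.single i 1) (m i)) :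
    ∃ g : MvPolynomial (Fin 4) ℂ,
      g.IsHomogeneous (3 * d - (m 0 + m 1 + m 2 + m 3)) ∧
      MvPolynomial.aeval
          (fun i => ∏ j ∈ Finset.univ.erase i, MvPolynomial.X j) f
        = (∏ i, MvPolynomial.X i ^ m i) * g ∧
      ∀ i, (∃ l : List (Fin 4), l.length = m i ∧
              MvPolynomial.eval (Pi.single i 1) (pderivList l f) ≠ 0) →
        ¬ (MvPolynomial.X i ∣ g) := by
  set M : Fin 4 →₀ ℕ := Finsupp.equivFunOnFinite.symm m
  have hM : ∀ a ∈ f.support, M ≤ Finsupp.recipExponent a := fun a ha j =>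
    (multAtLeast_piSingle_one_iff hhom).mp (hmult j) a ha
  obtain ⟨g, hg, hfg, hcoeff⟩ := exists_aeval_prod_erase_X_eq_monomial_mul hhom hM
  refine ⟨g, ?_, ?_, ?_⟩
  · simpa [M, Finsupp.degree_eq_sum, Fin.sum_univ_four] using hg
  · rw [hfg, monomial_eq, C_1, one_mul, Finsupp.prod_fintype _ _ fun _ => pow_zero _]
    rfl
  · rintro i ⟨l, hl, hne⟩ hdvd
    obtain ⟨a, ha, hlt⟩ : ∃ a ∈ f.support, Finsupp.offDegree i a < m i + 1 := by
      by_contra! h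
      exact hne ((multAtLeast_piSingle_one_iff hhom).mpr h l (by omega))
    have hi : (Finsupp.recipExponent a - M) i = 0 := by
      have := hM a ha i
      have hMi : M i = m i := rfl
      simp only [Finsupp.tsub_apply, Finsupp.recipExponent_apply] at this ⊢
      omega
    have hfa := hcoeff a ha
    rw [coeff_eq_zero_of_X_dvd hdvd hi] at hfa
    exact MvPolynomial.mem_support_iff.mp ha hfa.symm

/-- the reciprocal (space Cremona) transformation.  If `{f = 0}` has
multiplicity `≥ mᵢ` at the `i`-th coordinate vertex, then substituting
`(x, y, z, w) ↦ (yzw, xzw, xyw, xyz)` into `f` yields `x^{m₁} y^{m₂} z^{m₃} w^{m₄} · g`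
with `g` homogeneous of degree `3d − m₁ − m₂ − m₃ − m₄`; and if the multiplicity at the
`i`-th vertex is exactly `mᵢ`, the `i`-th variable does not divide `g`.  Thus the
reciprocal transformation maps a degree-`d` surface with multiplicities `m₁, …, m₄` at
the fundamental points to a surface of degree `3d − m₁ − ⋯ − m₄`. -/
theorem reciprocal_transformation
    (d : ℕ) (f : MvPolynomial (Fin 4) ℂ) (hf : f ≠ 0) (hhom : f.IsHomogeneous d)
    (m : Fin 4 → ℕ)
    (hmult : ∀ i, MultAtLeast f (Pi.single i 1) (m i)) :
    ∃ g : MvPolynomial (Fin 4) ℂ,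
      g.IsHomogeneous (3 * d - (m 0 + m 1 + m 2 + m 3)) ∧
      MvPolynomial.aeval
          (fun i => ∏ j ∈ Finset.univ.erase i, MvPolynomial.X j) f
        = (∏ i, MvPolynomial.X i ^ m i) * g ∧
      ∀ i, (∃ l : List (Fin 4), l.length = m i ∧
              MvPolynomial.eval (Pi.single i 1) (pderivList l f) ≠ 0) →
        ¬ (MvPolynomial.X i ∣ g) :=
  reciprocal_transformation_general d f hhom m hmult
end
end

section
/- Fix a₁, a₂, a₃, b₁, b₂, b₃ ∈ ℂ and set q₁ = z² + a₁y + b₁z − (a₁+b₁+1)yz, q₂ = x² + a₂z + b₂x − (a₂+b₂+1)xz, q₃ = y² + a₃x + b₃y − (a₃+b₃+1)xy, and q = (a₁−z)(a₂−x)(a₃−y) + (b₁+z)(b₂+x)(b₃+y). Then: (i) the identity (q₁, q₂, q₃)ᵀ = M · (1−x, 1−y, 1−z)ᵀ holds, where M is the matrix with rows (0, (b₁+z)z, (a₁−z)y), ((a₂−x)z, 0, (b₂+x)x), ((b₃+y)y, (a₃−y)x, 0); and (ii) every point (x, y, z) ∈ ℂ³ with q₁(x,y,z) = q₂(x,y,z)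 = q₃(x,y,z) = 0, xyz ≠ 0 and (x, y, z) ≠ (1, 1, 1) satisfies q(x, y, z) = 0. -/
/-! The three quadrics are the rows of `M *ᵥ (1 - x, 1 - y, 1 - z)`. At a common zero other than
`(1, 1, 1)` this vector is a nonzero kernel vector of `M`, so `det M = 0`; expanding the
determinant gives `det M = x y z q`, and `x y z ≠ 0` forces `q = 0`. -/

open Matrix

namespace QuadricCones

variable {R : Type*} [CommRing R]

/-- The matrix `M` of the paper. -/
def coneMatrix (a₁ a₂ a₃ b₁ b₂ b₃ x y z : R) : Matrix (Fin 3) (Fin 3) R :=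
  !![0, (b₁ + z) * z, (a₁ - z) * y;
     (a₂ - x) * z, 0, (b₂ + x) * x;
     (b₃ + y) * y, (a₃ - y) * x, 0]

theorem coneMatrix_mulVec (a₁ a₂ a₃ b₁ b₂ b₃ x y z : R) :
    coneMatrix a₁ a₂ a₃ b₁ b₂ b₃ x y z *ᵥ ![1 - x, 1 - y, 1 - z]
      = ![z ^ 2 + a₁ * y + b₁ * z - (a₁ + b₁ + 1) * y * z,
          x ^ 2 + a₂ * z + b₂ * x - (a₂ + b₂ + 1) * x * z,
          y ^ 2 + a₃ * x + b₃ * y - (a₃ + b₃ + 1) * x * y] := by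
  ext i
  fin_cases i <;>
    simp only [coneMatrix, mulVec, of_apply, vec3_dotProduct, Fin.reduceFinMk, Fin.isValue,
      cons_val] <;> ring

theorem det_coneMatrix (a₁ a₂ a₃ b₁ b₂ b₃ x y z : R) :
    (coneMatrix a₁ a₂ a₃ b₁ b₂ b₃ x y z).det
      = x * y * z * ((a₁ - z) * (a₂ - x) * (a₃ - y) + (b₁ + z) * (b₂ + x) * (b₃ + y)) := by
  rw [coneMatrix, det_fin_three]
  simp only [of_apply, cons_val', cons_val_zero, cons_val_one, cons_val_two, empty_val',
    cons_val_fin_one, head_cons, tail_cons, head_fin_const]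
  ring

theorem one_sub_vec_ne_zero {x y z : R} (h : (x, y, z) ≠ (1, 1, 1)) :
    ![1 - x, 1 - y, 1 - z] ≠ 0 := by
  contrapose! h
  simp only [sub_eq_zero, cons_eq_zero_iff] at h
  obtain ⟨rfl, rfl, rfl, -⟩ := h
  rfl

end QuadricCones

open QuadricCones

/-- with `q₁ = z² + a₁y + b₁z − (a₁+b₁+1)yz`,
`q₂ = x² + a₂z + b₂x − (a₂+b₂+1)xz`, `q₃ = y² + a₃x + b₃y − (a₃+b₃+1)xy` and
`q = (a₁−z)(a₂−x)(a₃−y) + (b₁+z)(b₂+x)(b₃+y)`: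
(i) `(q₁,q₂,q₃)ᵀ = M·(1−x,1−y,1−z)ᵀ` for the matrix `M` with rows
`(0, (b₁+z)z, (a₁−z)y)`, `((a₂−x)z, 0, (b₂+x)x)`, `((b₃+y)y, (a₃−y)x, 0)`;
(ii) every common zero of `q₁, q₂, q₃` with `xyz ≠ 0` and `(x,y,z) ≠ (1,1,1)`
is a zero of `q`. -/
theorem quadric_through_base_points (a₁ a₂ a₃ b₁ b₂ b₃ : ℂ) :
    (∀ x y z : ℂ,
      Matrix.mulVec
        !![0, (b₁ + z) * z, (a₁ - z) * y;
           (a₂ - x) * z, 0, (b₂ + x) * x;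
           (b₃ + y) * y, (a₃ - y) * x, 0]
        ![1 - x, 1 - y, 1 - z]
      = ![z ^ 2 + a₁ * y + b₁ * z - (a₁ + b₁ + 1) * y * z,
          x ^ 2 + a₂ * z + b₂ * x - (a₂ + b₂ + 1) * x * z,
          y ^ 2 + a₃ * x + b₃ * y - (a₃ + b₃ + 1) * x * y]) ∧
    (∀ x y z : ℂ,
      z ^ 2 + a₁ * y + b₁ * z - (a₁ + b₁ + 1) * y * z = 0 →
      x ^ 2 + a₂ * z + b₂ * x - (a₂ + b₂ + 1) * x * z = 0 →
      y ^ 2 + a₃ * x + b₃ * y - (a₃ + b₃ + 1) * x * y = 0 →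
      x * y * z ≠ 0 → (x, y, z) ≠ (1, 1, 1) →
      (a₁ - z) * (a₂ - x) * (a₃ - y) + (b₁ + z) * (b₂ + x) * (b₃ + y) = 0) := by
  refine ⟨coneMatrix_mulVec a₁ a₂ a₃ b₁ b₂ b₃, ?_⟩
  intro x y z h₁ h₂ h₃ hxyz hne
  have hker : coneMatrix a₁ a₂ a₃ b₁ b₂ b₃ x y z *ᵥ ![1 - x, 1 - y, 1 - z] = 0 := by
    rw [coneMatrix_mulVec, h₁, h₂, h₃]
    simp
  have hdet : (coneMatrix a₁ a₂ a₃ b₁ b₂ b₃ x y z).det = 0 :=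
    exists_mulVec_eq_zero_iff.mp ⟨_, one_sub_vec_ne_zero hne, hker⟩
  rw [det_coneMatrix] at hdet
  exact (mul_eq_zero.mp hdet).resolve_left hxyz
end
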